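/- arXiv:2106.13853 — 6 statements merged into one kernel-verified Lean document; each statement's English description precedes it below -/
import Mathlib

section
/- Let f : E → ℝ be differentiable, μ-strongly convex and L-smooth on X. Fix y ∈ X, ĝ ∈ E, and α ≥ L. Let z be the unique minimizer over X of x ↦ ⟨ĝ, x − y⟩ + (α/2)‖x − y‖², and let x* be a minimizer of f over X. Then for every γ > 0: (α + μ − γ)‖z − x*‖² + (α − L)‖z − y‖² ≤ (α − μ)‖y − x*‖² + (1/γ)‖∇f(y) − ĝ‖². -/
/-!
Write `g = ∇f(y)`. First-order optimality of `x*` for `f` over `X`, combined with smoothness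
from `y` to `z` and strong convexity from `y` to `x*` and from `x*` to `z`, gives
`μ‖y − x*‖² + μ‖z − x*‖² ≤ 2⟪g, z − x*⟫ + L‖z − y‖²`. First-order optimality of `z` for the
quadratic model bounds `2⟪ĝ, z − x*⟫` by `α (‖x* − y‖² − ‖z − y‖² − ‖z − x*‖²)`, and Young's
inequality bounds the remaining `2⟪g − ĝ, z − x*⟫` by `‖g − ĝ‖²/γ + γ‖z − x*‖²`.
-/

open scoped RealInnerProductSpace

section

variable {E : Type*} [NormedAddCommGroup E] [InnerProductSpace ℝ E]

theorem two_mul_inner_le_one_div_mul_add_mul (u v : E) {γ : ℝ} (hγ : 0 < γ) :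
    2 * ⟪u, v⟫ ≤ 1 / γ * ‖u‖ ^ 2 + γ * ‖v‖ ^ 2 :=
  calc 2 * ⟪u, v⟫ ≤ 2 * (‖u‖ * ‖v‖) := by gcongr; exact real_inner_le_norm u v
    _ = 1 / γ * ‖u‖ ^ 2 + γ * ‖v‖ ^ 2 - 1 / γ * (‖u‖ - γ * ‖v‖) ^ 2 := by field_simp; ring
    _ ≤ 1 / γ * ‖u‖ ^ 2 + γ * ‖v‖ ^ 2 := sub_le_self _ (by positivity)

/-- Its minimiser over `X` is the projected step from `y` along the gradient estimate `g` with
step size `1 / α`. -/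
noncomputable def gradientStepModel (g y : E) (α : ℝ) (x : E) : ℝ :=
  ⟪g, x - y⟫ + α / 2 * ‖x - y‖ ^ 2

variable [CompleteSpace E]

theorem IsMinOn.inner_sub_nonneg_of_hasGradientAt {f : E → ℝ} {s : Set E} {a b g : E}
    (hs : Convex ℝ s) (hmin : IsMinOn f s a) (ha : a ∈ s) (hb : b ∈ s)
    (hf : HasGradientAt f g a) : 0 ≤ ⟪g, b - a⟫ := by
  simpa using hmin.localize.hasFDerivWithinAt_nonneg hf.hasFDerivAt.hasFDerivWithinAt
    (sub_mem_posTangentConeAt_of_segment_subset (hs.segment_subset ha hb))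

theorem hasGradientAt_gradientStepModel (g y x : E) (α : ℝ) :
    HasGradientAt (gradientStepModel g y α) (g + α • (x - y)) x := by
  rw [hasGradientAt_iff_hasFDerivAt]
  have h := (hasFDerivAt_id (𝕜 := ℝ) x).sub_const y
  refine (((hasFDerivAt_const g x).inner ℝ h).add (h.norm_sq.const_mul (α / 2))).congr_fderiv ?_
  ext v
  simp only [id_eq, map_sub, ContinuousLinearMap.comp_id, add_apply, ContinuousLinearMap.comp_apply,
    ContinuousLinearMap.prod_apply, zero_apply, ContinuousLinearMap.id_apply, fderivInnerCLM_apply,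
    inner_zero_left, add_zero, smul_apply, sub_apply, coe_innerSL_apply, nsmul_eq_mul,
    Nat.cast_ofNat, smul_eq_mul, map_add, map_smul, InnerProductSpace.toDual_apply_apply,
    add_right_inj]
  ring

theorem two_mul_inner_sub_le_of_isMinOn_gradientStepModel {s : Set E} {g y z x : E} {α : ℝ}
    (hs : Convex ℝ s) (hmin : IsMinOn (gradientStepModel g y α) s z) (hz : z ∈ s) (hx : x ∈ s) :
    2 * ⟪g, z - x⟫ ≤ α * (‖x - y‖ ^ 2 - ‖z - y‖ ^ 2 - ‖z - x‖ ^ 2) := by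
  have hopt := hmin.inner_sub_nonneg_of_hasGradientAt hs hz hx
    (hasGradientAt_gradientStepModel g y z α)
  have hsplit : x - y = (z - y) + (x - z) := by abel
  have hflip : ⟪g, z - x⟫ = -⟪g, x - z⟫ := by rw [← inner_neg_right, neg_sub]
  rw [inner_add_left, real_inner_smul_left] at hopt
  rw [hsplit, norm_add_sq_real, norm_sub_rev z x, hflip]
  linear_combination 2 * hopt

theorem IsMinOn.mul_add_sq_norm_sub_le_inner_gradient {X : Set E} {f : E → ℝ} {μ L : ℝ}
    (hsc : ∀ a ∈ X, ∀ b ∈ X, f a + ⟪gradient f a, b - a⟫ + μ / 2 * ‖b - a‖ ^ 2 ≤ f b)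
    (hsm : ∀ a ∈ X, ∀ b ∈ X, f b ≤ f a + ⟪gradient f a, b - a⟫ + L / 2 * ‖b - a‖ ^ 2)
    {xs y z : E} (hX : Convex ℝ X) (hmin : IsMinOn f X xs) (hf : DifferentiableAt ℝ f xs)
    (hxs : xs ∈ X) (hy : y ∈ X) (hz : z ∈ X) :
    μ * (‖y - xs‖ ^ 2 + ‖z - xs‖ ^ 2) ≤ 2 * ⟪gradient f y, z - xs⟫ + L * ‖z - y‖ ^ 2 := by
  have hopt := hmin.inner_sub_nonneg_of_hasGradientAt hX hxs hz hf.hasGradientAt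
  have hyz := hsm y hy z hz
  have hyxs := hsc y hy xs hxs
  have hxsz := hsc xs hxs z hz
  have hsplit : ⟪gradient f y, z - y⟫ - ⟪gradient f y, xs - y⟫ = ⟪gradient f y, z - xs⟫ := by
    rw [← inner_sub_right, sub_sub_sub_cancel_right]
  rw [norm_sub_rev xs y] at hyxs
  linarith

end

theorem stmt_1_general
    {E : Type*} [NormedAddCommGroup E] [InnerProductSpace ℝ E] [FiniteDimensional ℝ E]
    (X : Set E) (hXconv : Convex ℝ X)
    (f : E → ℝ) (hf : Differentiable ℝ f)
    (μ L : ℝ)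
    (hsc : ∀ a ∈ X, ∀ b ∈ X,
      f a + ⟪gradient f a, b - a⟫ + μ / 2 * ‖b - a‖ ^ 2 ≤ f b)
    (hsm : ∀ a ∈ X, ∀ b ∈ X,
      f b ≤ f a + ⟪gradient f a, b - a⟫ + L / 2 * ‖b - a‖ ^ 2)
    (y : E) (hy : y ∈ X) (ghat : E)
    (α : ℝ)
    (z : E) (hzX : z ∈ X)
    (hz : ∀ x ∈ X,
      ⟪ghat, z - y⟫ + α / 2 * ‖z - y‖ ^ 2 ≤ ⟪ghat, x - y⟫ + α / 2 * ‖x - y‖ ^ 2)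
    (xs : E) (hxsX : xs ∈ X) (hxs : ∀ x ∈ X, f xs ≤ f x) :
    ∀ γ : ℝ, 0 < γ →
      (α + μ - γ) * ‖z - xs‖ ^ 2 + (α - L) * ‖z - y‖ ^ 2
        ≤ (α - μ) * ‖y - xs‖ ^ 2 + 1 / γ * ‖gradient f y - ghat‖ ^ 2 := by
  intro γ hγ
  have hf_step := IsMinOn.mul_add_sq_norm_sub_le_inner_gradient hsc hsm hXconv hxs (hf xs)
    hxsX hy hzX
  have hmodel_step := two_mul_inner_sub_le_of_isMinOn_gradientStepModel hXconv hz hzX hxsX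
  have hyoung := two_mul_inner_le_one_div_mul_add_mul (gradient f y - ghat) (z - xs) hγ
  rw [norm_sub_rev xs y] at hmodel_step
  rw [inner_sub_left] at hyoung
  linear_combination hf_step + hmodel_step + hyoung

/-- Key inequality (eq. (13) in the paper) for one step of estimated gradient
descent: for any `γ > 0`,
`(α + μ − γ)‖z − x*‖² + (α − L)‖z − y‖² ≤ (α − μ)‖y − x*‖² + (1/γ)‖∇f(y) − ĝ‖²`. -/
theorem stmt_1
    {E : Type*} [NormedAddCommGroup E] [InnerProductSpace ℝ E] [FiniteDimensional ℝ E]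
    (X : Set E) (hXne : X.Nonempty) (hXcp : IsCompact X) (hXconv : Convex ℝ X)
    (f : E → ℝ) (hf : Differentiable ℝ f)
    (μ L : ℝ) (hμ : 0 < μ) (hL : 0 < L)
    (hsc : ∀ a ∈ X, ∀ b ∈ X,
      f a + ⟪gradient f a, b - a⟫ + μ / 2 * ‖b - a‖ ^ 2 ≤ f b)
    (hsm : ∀ a ∈ X, ∀ b ∈ X,
      f b ≤ f a + ⟪gradient f a, b - a⟫ + L / 2 * ‖b - a‖ ^ 2)
    (y : E) (hy : y ∈ X) (ghat : E)
    (α : ℝ) (hα : L ≤ α)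
    (z : E) (hzX : z ∈ X)
    (hz : ∀ x ∈ X,
      ⟪ghat, z - y⟫ + α / 2 * ‖z - y‖ ^ 2 ≤ ⟪ghat, x - y⟫ + α / 2 * ‖x - y‖ ^ 2)
    (xs : E) (hxsX : xs ∈ X) (hxs : ∀ x ∈ X, f xs ≤ f x) :
    ∀ γ : ℝ, 0 < γ →
      (α + μ - γ) * ‖z - xs‖ ^ 2 + (α - L) * ‖z - y‖ ^ 2
        ≤ (α - μ) * ‖y - xs‖ ^ 2 + 1 / γ * ‖gradient f y - ghat‖ ^ 2 :=
  stmt_1_general X hXconv f hf μ L hsc hsm y hy ghat α z hzX hz xs hxsX hxs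
end

section
/- Let f : E → ℝ be differentiable, μ-strongly convex and L-smooth on X. Fix y ∈ X, ĝ ∈ E, α ≥ L, and γ ∈ (0, 2μ). Let z be the unique minimizer over X of x ↦ ⟨ĝ, x − y⟩ + (α/2)‖x − y‖², and let x* be a minimizer of f over X. If the gradient estimation error satisfies ‖ĝ − ∇f(y)‖² ≤ γ(2μ − γ)‖y − x*‖², then ‖z − x*‖² ≤ ‖y − x*‖². -/
open scoped RealInnerProductSpace

/-!
Both `z` and `x*` are constrained minimizers, so each satisfies a first-order variational
inequality on `X`; for `z` it reads `⟪ĝ + α (z - y), x* - z⟫ ≥ 0`. Write `ĝ = ∇f(y) + e`.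
Strong convexity along `y → x*`, smoothness along `y → z` and the quadratic growth
`f z ≥ f x* + μ/2 ‖z - x*‖²` bound `⟪∇f(y), x* - z⟫`, while Young's inequality with weight `γ`
and the error bound give `⟪e, x* - z⟫ ≤ (2μ - γ)/2 ‖y - x*‖² + γ/2 ‖z - x*‖²`. Summing yields
`(α + μ - γ) (‖y - x*‖² - ‖z - x*‖²) ≥ (α - L) ‖z - y‖² ≥ 0`.
-/

theorem IsMinOn.hasFDerivAt_apply_sub_nonneg {F : Type*} [NormedAddCommGroup F]
    [NormedSpace ℝ F] {φ : F → ℝ} {φ' : F →L[ℝ] ℝ} {s : Set F} {a b : F}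
    (hmin : IsMinOn φ s a) (hs : Convex ℝ s) (ha : a ∈ s) (hb : b ∈ s)
    (hφ : HasFDerivAt φ φ' a) : 0 ≤ φ' (b - a) :=
  hmin.localize.hasFDerivWithinAt_nonneg hφ.hasFDerivWithinAt
    (sub_mem_posTangentConeAt_of_segment_subset (hs.segment_subset ha hb))

section InnerProductSpace

variable {E : Type*} [NormedAddCommGroup E] [InnerProductSpace ℝ E]

theorem hasFDerivAt_inner_sub_add_mul_norm_sub_sq (g y x : E) (α : ℝ) :
    HasFDerivAt (fun x => ⟪g, x - y⟫ + α / 2 * ‖x - y‖ ^ 2) (innerSL ℝ (g + α • (x - y))) x := by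
  have hsub := (hasFDerivAt_id (𝕜 := ℝ) x).sub_const y
  refine (((innerSL ℝ g).hasFDerivAt.comp x hsub).add
    (hsub.norm_sq.const_mul (α / 2))).congr_fderiv ?_
  ext v
  simp
  ring

theorem two_mul_mul_real_inner_le (u v : E) (c : ℝ) :
    2 * c * ⟪u, v⟫ ≤ ‖u‖ ^ 2 + c ^ 2 * ‖v‖ ^ 2 := by
  have h := norm_sub_sq_real u (c • v)
  rw [real_inner_smul_right, norm_smul, mul_pow, Real.norm_eq_abs, sq_abs] at h
  nlinarith [sq_nonneg ‖u - c • v‖]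

variable [CompleteSpace E] {X : Set E} {f : E → ℝ} {μ L : ℝ} {xs : E}

theorem IsMinOn.add_mul_norm_sub_sq_le (hX : Convex ℝ X)
    (hsc : ∀ a ∈ X, ∀ b ∈ X, f a + ⟪gradient f a, b - a⟫ + μ / 2 * ‖b - a‖ ^ 2 ≤ f b)
    (hmin : IsMinOn f X xs) (hf : DifferentiableAt ℝ f xs) (hxs : xs ∈ X) {b : E}
    (hb : b ∈ X) : f xs + μ / 2 * ‖b - xs‖ ^ 2 ≤ f b := by
  have hVI := hmin.hasFDerivAt_apply_sub_nonneg hX hxs hb hf.hasGradientAt.hasFDerivAt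
  rw [InnerProductSpace.toDual_apply_apply] at hVI
  linarith [hsc xs hxs b hb]

theorem IsMinOn.inner_gradient_sub_le (hX : Convex ℝ X)
    (hsc : ∀ a ∈ X, ∀ b ∈ X, f a + ⟪gradient f a, b - a⟫ + μ / 2 * ‖b - a‖ ^ 2 ≤ f b)
    (hsm : ∀ a ∈ X, ∀ b ∈ X, f b ≤ f a + ⟪gradient f a, b - a⟫ + L / 2 * ‖b - a‖ ^ 2)
    (hmin : IsMinOn f X xs) (hf : DifferentiableAt ℝ f xs) (hxs : xs ∈ X) {y z : E}
    (hy : y ∈ X) (hz : z ∈ X) :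
    ⟪gradient f y, xs - z⟫ ≤ L / 2 * ‖z - y‖ ^ 2 - μ / 2 * (‖y - xs‖ ^ 2 + ‖z - xs‖ ^ 2) := by
  have hgrowth := hmin.add_mul_norm_sub_sq_le hX hsc hf hxs hz
  have hconvex := hsc y hy xs hxs
  rw [norm_sub_rev] at hconvex
  rw [show xs - z = (xs - y) - (z - y) by abel, inner_sub_right]
  linarith [hsm y hy z hz]

end InnerProductSpace

theorem stmt_2_general
    {E : Type*} [NormedAddCommGroup E] [InnerProductSpace ℝ E] [FiniteDimensional ℝ E]
    (X : Set E) (hXconv : Convex ℝ X)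
    (f : E → ℝ) (hf : Differentiable ℝ f)
    (μ L : ℝ)
    (hsc : ∀ a ∈ X, ∀ b ∈ X,
      f a + ⟪gradient f a, b - a⟫ + μ / 2 * ‖b - a‖ ^ 2 ≤ f b)
    (hsm : ∀ a ∈ X, ∀ b ∈ X,
      f b ≤ f a + ⟪gradient f a, b - a⟫ + L / 2 * ‖b - a‖ ^ 2)
    (y : E) (hy : y ∈ X) (ghat : E)
    (α γ : ℝ) (hα : L ≤ α) (hγ0 : 0 < γ) (hγ : γ < 2 * μ)
    (z : E) (hzX : z ∈ X)
    (hz : ∀ x ∈ X,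
      ⟪ghat, z - y⟫ + α / 2 * ‖z - y‖ ^ 2 ≤ ⟪ghat, x - y⟫ + α / 2 * ‖x - y‖ ^ 2)
    (xs : E) (hxsX : xs ∈ X) (hxs : ∀ x ∈ X, f xs ≤ f x)
    (herr : ‖ghat - gradient f y‖ ^ 2 ≤ γ * (2 * μ - γ) * ‖y - xs‖ ^ 2) :
    ‖z - xs‖ ^ 2 ≤ ‖y - xs‖ ^ 2 := by
  rcases lt_or_ge α μ with hαμ | hμα
  · -- Then `L < μ`, which strong convexity and smoothness allow only if `z = xs`.
    have : μ * ‖z - xs‖ ^ 2 ≤ L * ‖z - xs‖ ^ 2 := by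
      linarith [hsc xs hxsX z hzX, hsm xs hxsX z hzX]
    nlinarith [sq_nonneg ‖z - xs‖, sq_nonneg ‖y - xs‖]
  have hVI : 0 ≤ ⟪ghat + α • (z - y), xs - z⟫ :=
    (isMinOn_iff.2 hz).hasFDerivAt_apply_sub_nonneg hXconv hzX hxsX
      (hasFDerivAt_inner_sub_add_mul_norm_sub_sq ghat y z α)
  have hgrad := (isMinOn_iff.2 hxs).inner_gradient_sub_le hXconv hsc hsm (hf xs) hxsX hy hzX
  have hyoung := two_mul_mul_real_inner_le (ghat - gradient f y) (xs - z) γ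
  have hpolar : 2 * ⟪z - y, xs - z⟫ = ‖y - xs‖ ^ 2 - ‖z - y‖ ^ 2 - ‖z - xs‖ ^ 2 := by
    have h := norm_add_sq_real (z - y) (xs - z)
    rw [show z - y + (xs - z) = xs - y by abel, norm_sub_rev xs y, norm_sub_rev xs z] at h
    linarith
  rw [norm_sub_rev xs z] at hyoung
  rw [show ghat = (ghat - gradient f y) + gradient f y by abel, inner_add_left, inner_add_left,
    real_inner_smul_left] at hVI
  have hsum : 0 ≤ γ * ((α + μ - γ) * (‖y - xs‖ ^ 2 - ‖z - xs‖ ^ 2) + (L - α) * ‖z - y‖ ^ 2) := by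
    linear_combination (2 * γ) * hVI + hyoung + herr + (2 * γ) * hgrad + γ * α * hpolar
  have hcontract : 0 ≤ (α + μ - γ) * (‖y - xs‖ ^ 2 - ‖z - xs‖ ^ 2) := by
    nlinarith [nonneg_of_mul_nonneg_right hsum hγ0, sq_nonneg ‖z - y‖]
  linarith [nonneg_of_mul_nonneg_right hcontract (by linarith)]

/-- Non-expansion condition: if the gradient estimation error satisfies
`‖ĝ − ∇f(y)‖² ≤ γ(2μ − γ)‖y − x*‖²`, then one step of estimated gradient
descent does not move away from the minimizer: `‖z − x*‖² ≤ ‖y − x*‖²`. -/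
theorem stmt_2
    {E : Type*} [NormedAddCommGroup E] [InnerProductSpace ℝ E] [FiniteDimensional ℝ E]
    (X : Set E) (hXne : X.Nonempty) (hXcp : IsCompact X) (hXconv : Convex ℝ X)
    (f : E → ℝ) (hf : Differentiable ℝ f)
    (μ L : ℝ) (hμ : 0 < μ) (hL : 0 < L)
    (hsc : ∀ a ∈ X, ∀ b ∈ X,
      f a + ⟪gradient f a, b - a⟫ + μ / 2 * ‖b - a‖ ^ 2 ≤ f b)
    (hsm : ∀ a ∈ X, ∀ b ∈ X,
      f b ≤ f a + ⟪gradient f a, b - a⟫ + L / 2 * ‖b - a‖ ^ 2)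
    (y : E) (hy : y ∈ X) (ghat : E)
    (α γ : ℝ) (hα : L ≤ α) (hγ0 : 0 < γ) (hγ : γ < 2 * μ)
    (z : E) (hzX : z ∈ X)
    (hz : ∀ x ∈ X,
      ⟪ghat, z - y⟫ + α / 2 * ‖z - y‖ ^ 2 ≤ ⟪ghat, x - y⟫ + α / 2 * ‖x - y‖ ^ 2)
    (xs : E) (hxsX : xs ∈ X) (hxs : ∀ x ∈ X, f xs ≤ f x)
    (herr : ‖ghat - gradient f y‖ ^ 2 ≤ γ * (2 * μ - γ) * ‖y - xs‖ ^ 2) :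
    ‖z - xs‖ ^ 2 ≤ ‖y - xs‖ ^ 2 :=
  stmt_2_general X hXconv f hf μ L hsc hsm y hy ghat α γ hα hγ0 hγ z hzX hz xs hxsX hxs herr
end

section
/- Let f : E → ℝ be differentiable, μ-strongly convex and L-smooth on X. Fix y ∈ X, ĝ ∈ E, α ≥ L, and γ ∈ (0, 2μ). Let z be the unique minimizer over X of x ↦ ⟨ĝ, x − y⟩ + (α/2)‖x − y‖², and let x* be a minimizer of f over X. Then ‖z − x*‖ ≤ √η · ‖y − x*‖ + √β · ‖ĝ − ∇f(y)‖, where η = (α − μ)/(α + μ − γ) and β = 1/(γ(α + μ − γ)). -/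
open scoped RealInnerProductSpace
open Set Filter Topology

/-!
At a minimizer over a convex set, a function with a quadratic upper bound `⟪v, b - x⟫ + C ‖b - x‖²`
satisfies the first-order condition `0 ≤ ⟪v, w - x⟫`, as one sees by moving along segments.
For `x*` this sharpens strong convexity at `x*` to `f x* + μ/2 ‖z - x*‖² ≤ f z`; together with
strong convexity and smoothness at `y` and `L ≤ α` it gives
`⟪∇f y, x* - z⟫ + μ/2 ‖y - x*‖² + μ/2 ‖z - x*‖² ≤ α/2 ‖z - y‖²`.
For `z` it reads `0 ≤ ⟪ĝ + α (z - y), x* - z⟫`, and polarizing `⟪z - y, x* - z⟫` cancels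
`‖z - y‖²`. What is left, `(α + μ) ‖z - x*‖² ≤ (α - μ) ‖y - x*‖² + 2 ⟪ĝ - ∇f y, x* - z⟫`, becomes
the squared bound after Young's inequality with weight `γ`. Since `μ ≤ L ≤ α` unless `z = x*`,
`η` and `β` are nonnegative and the square root can be taken termwise.
-/

lemma nonneg_of_forall_nonneg_mul_add_sq {a c : ℝ}
    (h : ∀ t ∈ Ioc (0 : ℝ) 1, 0 ≤ t * a + t ^ 2 * c) : 0 ≤ a := by
  have hlim : Tendsto (fun t => a + t * c) (𝓝[>] 0) (𝓝 a) := by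
    have : Tendsto (fun t : ℝ => a + t * c) (𝓝 0) (𝓝 (a + 0 * c)) :=
      tendsto_const_nhds.add (tendsto_id.mul_const c)
    simpa using this.mono_left nhdsWithin_le_nhds
  refine ge_of_tendsto hlim ?_
  filter_upwards [Ioc_mem_nhdsGT one_pos] with t ht
  refine nonneg_of_mul_nonneg_right ?_ ht.1
  linear_combination h t ht

lemma le_sqrt_mul_add_sqrt_mul {a b c η β : ℝ} (hb : 0 ≤ b) (hc : 0 ≤ c) (hη : 0 ≤ η)
    (hβ : 0 ≤ β) (h : a ^ 2 ≤ η * b ^ 2 + β * c ^ 2) : a ≤ √η * b + √β * c := by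
  refine le_of_pow_le_pow_left₀ two_ne_zero (by positivity) ?_
  nlinarith [Real.sq_sqrt hη, Real.sq_sqrt hβ, Real.sqrt_nonneg η, Real.sqrt_nonneg β,
    mul_nonneg (mul_nonneg (Real.sqrt_nonneg η) (Real.sqrt_nonneg β)) (mul_nonneg hb hc)]

section

variable {E : Type*} [NormedAddCommGroup E] [InnerProductSpace ℝ E]

theorem IsMinOn.inner_sub_nonneg_of_le_quadratic {X : Set E} (hX : Convex ℝ X) {φ : E → ℝ}
    {x v : E} {C : ℝ} (hmin : IsMinOn φ X x) (hx : x ∈ X)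
    (hφ : ∀ b ∈ X, φ b ≤ φ x + ⟪v, b - x⟫ + C * ‖b - x‖ ^ 2) {w : E} (hw : w ∈ X) :
    0 ≤ ⟪v, w - x⟫ := by
  refine nonneg_of_forall_nonneg_mul_add_sq (c := C * ‖w - x‖ ^ 2) fun t ht => ?_
  have hxt : x + t • (w - x) ∈ X := hX.add_smul_sub_mem hx hw (Ioc_subset_Icc_self ht)
  have hle := (isMinOn_iff.1 hmin _ hxt).trans (hφ _ hxt)
  rw [add_sub_cancel_left, real_inner_smul_right, norm_smul, Real.norm_of_nonneg ht.1.le,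
    mul_pow] at hle
  linarith

/-- The objective of the projected step from `y` with gradient estimate `ĝ` and step `1 / α`. -/
noncomputable def proxModel (ghat y : E) (α : ℝ) (x : E) : ℝ :=
  ⟪ghat, x - y⟫ + α / 2 * ‖x - y‖ ^ 2

theorem proxModel_eq (ghat y : E) (α : ℝ) (z x : E) :
    proxModel ghat y α x =
      proxModel ghat y α z + ⟪ghat + α • (z - y), x - z⟫ + α / 2 * ‖x - z‖ ^ 2 := by
  have hsplit : x - y = (z - y) + (x - z) := by abel
  simp only [proxModel, hsplit, inner_add_right, inner_add_left, real_inner_smul_left,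
    norm_add_sq_real]
  ring

theorem le_of_stronglyConvex_smooth {X : Set E} {f : E → ℝ} {g : E → E} {μ L : ℝ}
    (hsc : ∀ a ∈ X, ∀ b ∈ X, f a + ⟪g a, b - a⟫ + μ / 2 * ‖b - a‖ ^ 2 ≤ f b)
    (hsm : ∀ a ∈ X, ∀ b ∈ X, f b ≤ f a + ⟪g a, b - a⟫ + L / 2 * ‖b - a‖ ^ 2)
    {a b : E} (ha : a ∈ X) (hb : b ∈ X) (hab : a ≠ b) : μ ≤ L := by
  have hpos : 0 < ‖b - a‖ ^ 2 := by
    have : b - a ≠ 0 := sub_ne_zero.2 hab.symm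
    positivity
  nlinarith [hsc a ha b hb, hsm a ha b hb]

theorem sq_norm_sub_le_of_isMinOn_proxModel {X : Set E} (hX : Convex ℝ X) {f : E → ℝ}
    {g : E → E} {μ L : ℝ}
    (hsc : ∀ a ∈ X, ∀ b ∈ X, f a + ⟪g a, b - a⟫ + μ / 2 * ‖b - a‖ ^ 2 ≤ f b)
    (hsm : ∀ a ∈ X, ∀ b ∈ X, f b ≤ f a + ⟪g a, b - a⟫ + L / 2 * ‖b - a‖ ^ 2)
    {y ghat z xs : E} {α γ : ℝ} (hy : y ∈ X) (hα : L ≤ α) (hγ : 0 < γ)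
    (hzX : z ∈ X) (hz : IsMinOn (proxModel ghat y α) X z)
    (hxsX : xs ∈ X) (hxs : IsMinOn f X xs) :
    (α + μ - γ) * ‖z - xs‖ ^ 2 ≤ (α - μ) * ‖y - xs‖ ^ 2 + ‖ghat - g y‖ ^ 2 / γ := by
  have hopt_xs : 0 ≤ ⟪g xs, z - xs⟫ :=
    hxs.inner_sub_nonneg_of_le_quadratic hX hxsX (C := L / 2) (hsm xs hxsX) hzX
  have hopt_z : 0 ≤ ⟪ghat + α • (z - y), xs - z⟫ :=
    hz.inner_sub_nonneg_of_le_quadratic hX hzX (C := α / 2)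
      (fun b _ => (proxModel_eq ghat y α z b).le) hxsX
  have hthree : ⟪g y, xs - z⟫ + μ / 2 * ‖y - xs‖ ^ 2 + μ / 2 * ‖z - xs‖ ^ 2
      ≤ α / 2 * ‖z - y‖ ^ 2 := by
    have hsplit : ⟪g y, xs - y⟫ = ⟪g y, xs - z⟫ + ⟪g y, z - y⟫ := by
      rw [← inner_add_right, sub_add_sub_cancel]
    have hLα : L / 2 * ‖z - y‖ ^ 2 ≤ α / 2 * ‖z - y‖ ^ 2 := by gcongr
    have hsc_y := hsc y hy xs hxsX
    rw [norm_sub_rev] at hsc_y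
    linarith [hsm y hy z hzX, hsc xs hxsX z hzX]
  have hpolar : 2 * ⟪z - y, xs - z⟫ = ‖y - xs‖ ^ 2 - ‖z - xs‖ ^ 2 - ‖z - y‖ ^ 2 := by
    rw [norm_sub_rev y, norm_sub_rev z, show xs - y = (xs - z) + (z - y) by abel,
      norm_add_sq_real, real_inner_comm]
    ring
  have hyoung : 2 * ⟪ghat - g y, xs - z⟫ ≤ ‖ghat - g y‖ ^ 2 / γ + γ * ‖z - xs‖ ^ 2 := by
    have hcs := real_inner_le_norm (ghat - g y) (xs - z)
    have := sq_nonneg (‖ghat - g y‖ - γ * ‖z - xs‖)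
    rw [norm_sub_rev xs] at hcs
    rw [div_add' _ _ _ hγ.ne', le_div_iff₀ hγ]
    nlinarith
  rw [inner_add_left, real_inner_smul_left, ← sub_add_cancel ghat (g y), inner_add_left]
    at hopt_z
  linear_combination 2 * hthree + 2 * hopt_z + α * hpolar + hyoung

end

theorem stmt_3_general
    {E : Type*} [NormedAddCommGroup E] [InnerProductSpace ℝ E] [FiniteDimensional ℝ E]
    (X : Set E) (hXconv : Convex ℝ X)
    (f : E → ℝ)
    (μ L : ℝ)
    (hsc : ∀ a ∈ X, ∀ b ∈ X,
      f a + ⟪gradient f a, b - a⟫ + μ / 2 * ‖b - a‖ ^ 2 ≤ f b)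
    (hsm : ∀ a ∈ X, ∀ b ∈ X,
      f b ≤ f a + ⟪gradient f a, b - a⟫ + L / 2 * ‖b - a‖ ^ 2)
    (y : E) (hy : y ∈ X) (ghat : E)
    (α γ : ℝ) (hα : L ≤ α) (hγ0 : 0 < γ) (hγ : γ < 2 * μ)
    (z : E) (hzX : z ∈ X)
    (hz : ∀ x ∈ X,
      ⟪ghat, z - y⟫ + α / 2 * ‖z - y‖ ^ 2 ≤ ⟪ghat, x - y⟫ + α / 2 * ‖x - y‖ ^ 2)
    (xs : E) (hxsX : xs ∈ X) (hxs : ∀ x ∈ X, f xs ≤ f x) :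
    ‖z - xs‖ ≤ Real.sqrt ((α - μ) / (α + μ - γ)) * ‖y - xs‖
      + Real.sqrt (1 / (γ * (α + μ - γ))) * ‖ghat - gradient f y‖ := by
  rcases eq_or_ne z xs with rfl | hne
  · rw [sub_self, norm_zero]
    positivity
  have hμL : μ ≤ L := le_of_stronglyConvex_smooth hsc hsm hzX hxsX hne
  have hden : 0 < α + μ - γ := by linarith
  have key := sq_norm_sub_le_of_isMinOn_proxModel hXconv hsc hsm hy hα hγ0 hzX
    (isMinOn_iff.2 hz) hxsX (isMinOn_iff.2 hxs)
  refine le_sqrt_mul_add_sqrt_mul (norm_nonneg _) (norm_nonneg _)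
    (div_nonneg (by linarith) hden.le) (by positivity) ?_
  refine le_of_mul_le_mul_left (key.trans_eq ?_) hden
  field_simp

/-- Square-root form of the one-step estimated gradient descent contraction:
`‖z − x*‖ ≤ √η ‖y − x*‖ + √β ‖ĝ − ∇f(y)‖` with `η = (α − μ)/(α + μ − γ)` and
`β = 1/(γ(α + μ − γ))`. -/
theorem stmt_3
    {E : Type*} [NormedAddCommGroup E] [InnerProductSpace ℝ E] [FiniteDimensional ℝ E]
    (X : Set E) (hXne : X.Nonempty) (hXcp : IsCompact X) (hXconv : Convex ℝ X)
    (f : E → ℝ) (hf : Differentiable ℝ f)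
    (μ L : ℝ) (hμ : 0 < μ) (hL : 0 < L)
    (hsc : ∀ a ∈ X, ∀ b ∈ X,
      f a + ⟪gradient f a, b - a⟫ + μ / 2 * ‖b - a‖ ^ 2 ≤ f b)
    (hsm : ∀ a ∈ X, ∀ b ∈ X,
      f b ≤ f a + ⟪gradient f a, b - a⟫ + L / 2 * ‖b - a‖ ^ 2)
    (y : E) (hy : y ∈ X) (ghat : E)
    (α γ : ℝ) (hα : L ≤ α) (hγ0 : 0 < γ) (hγ : γ < 2 * μ)
    (z : E) (hzX : z ∈ X)
    (hz : ∀ x ∈ X,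
      ⟪ghat, z - y⟫ + α / 2 * ‖z - y‖ ^ 2 ≤ ⟪ghat, x - y⟫ + α / 2 * ‖x - y‖ ^ 2)
    (xs : E) (hxsX : xs ∈ X) (hxs : ∀ x ∈ X, f xs ≤ f x) :
    ‖z - xs‖ ≤ Real.sqrt ((α - μ) / (α + μ - γ)) * ‖y - xs‖
      + Real.sqrt (1 / (γ * (α + μ - γ))) * ‖ghat - gradient f y‖ :=
  stmt_3_general X hXconv f μ L hsc hsm y hy ghat α γ hα hγ0 hγ z hzX hz xs hxsX hxs
end

section
/- Let f : E → ℝ be differentiable, μ-strongly convex and L-smooth on X, let x* be a minimizer of f over X, let y ∈ X, and let α ≥ L. Let z = Proj_X(y − (1/α)∇f(y)) be the exact projected gradient step (equivalently, z is the minimizer over X of x ↦ ⟨∇f(y), x − y⟩ + (α/2)‖x − y‖²). Then ‖z − x*‖² ≤ ((α − μ)/(α + μ))‖y − x*‖². -/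
/-!
Write `g = ∇f(y)`. Optimality of `x*` and strong convexity give the quadratic growth
`f x* + (μ/2)‖z - x*‖² ≤ f z`; smoothness with `L ≤ α` bounds `f z` by the quadratic model at `y`,
and strong convexity at `y` bounds that model by `f x*` minus `⟪g, x* - z⟫` and `(μ/2)‖y - x*‖²`.
The projection inequality `α⟪y - z, x* - z⟫ ≤ ⟪g, x* - z⟫` together with the polarization
identity then leaves `(α + μ)‖z - x*‖² ≤ (α - μ)‖y - x*‖²`.
-/

open scoped RealInnerProductSpace

section

variable {E : Type*} [NormedAddCommGroup E] [InnerProductSpace ℝ E]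

theorem real_inner_sub_le_zero_of_forall_norm_sub_le {K : Set E} (hK : Convex ℝ K) {p z w : E}
    (hz : z ∈ K) (hmin : ∀ v ∈ K, ‖p - z‖ ≤ ‖p - v‖) (hw : w ∈ K) :
    ⟪p - z, w - z⟫ ≤ 0 := by
  have : Nonempty K := ⟨⟨z, hz⟩⟩
  have hinf : ‖p - z‖ = ⨅ v : K, ‖p - v‖ :=
    le_antisymm (le_ciInf fun v ↦ hmin v v.2)
      (ciInf_le ⟨0, Set.forall_mem_range.2 fun v : K ↦ norm_nonneg (p - v)⟩ ⟨z, hz⟩)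
  exact (norm_eq_iInf_iff_real_inner_le_zero hK hz).1 hinf w hw

theorem mul_real_inner_sub_le_of_forall_norm_sub_le {K : Set E} (hK : Convex ℝ K) {α : ℝ}
    (hα : 0 < α) {y g z x : E} (hz : z ∈ K) (hmin : ∀ v ∈ K, ‖(y - (1 / α) • g) - z‖ ≤ ‖(y - (1 / α) • g) - v‖)
    (hx : x ∈ K) : α * ⟪y - z, x - z⟫ ≤ ⟪g, x - z⟫ := by
  have h := real_inner_sub_le_zero_of_forall_norm_sub_le hK hz hmin hx
  rw [sub_right_comm, inner_sub_left, real_inner_smul_left] at h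
  have := mul_le_mul_of_nonneg_left h hα.le
  field_simp at this
  linarith

variable [CompleteSpace E]

theorem IsMinOn.real_inner_gradient_sub_nonneg {f : E → ℝ} {s : Set E} {a b : E}
    (hmin : IsMinOn f s a) (hs : Convex ℝ s) (ha : a ∈ s) (hb : b ∈ s)
    (hf : DifferentiableAt ℝ f a) : 0 ≤ ⟪gradient f a, b - a⟫ := by
  have := hmin.localize.hasFDerivWithinAt_nonneg
    hf.hasGradientAt.hasFDerivAt.hasFDerivWithinAt
    (sub_mem_posTangentConeAt_of_segment_subset (hs.segment_subset ha hb))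
  simpa using this

end

theorem stmt_4_general
    {E : Type*} [NormedAddCommGroup E] [InnerProductSpace ℝ E] [FiniteDimensional ℝ E]
    (X : Set E) (hXconv : Convex ℝ X)
    (f : E → ℝ) (hf : Differentiable ℝ f)
    (μ L : ℝ) (hμ : 0 < μ) (hL : 0 < L)
    (hsc : ∀ a ∈ X, ∀ b ∈ X,
      f a + ⟪gradient f a, b - a⟫ + μ / 2 * ‖b - a‖ ^ 2 ≤ f b)
    (hsm : ∀ a ∈ X, ∀ b ∈ X,
      f b ≤ f a + ⟪gradient f a, b - a⟫ + L / 2 * ‖b - a‖ ^ 2)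
    (xs : E) (hxsX : xs ∈ X) (hxs : ∀ x ∈ X, f xs ≤ f x)
    (y : E) (hy : y ∈ X)
    (α : ℝ) (hα : L ≤ α)
    (z : E) (hzX : z ∈ X)
    (hz : ∀ v ∈ X,
      ‖(y - (1 / α) • gradient f y) - z‖ ≤ ‖(y - (1 / α) • gradient f y) - v‖) :
    ‖z - xs‖ ^ 2 ≤ (α - μ) / (α + μ) * ‖y - xs‖ ^ 2 := by
  have hα0 : 0 < α := hL.trans_le hα
  have hopt : 0 ≤ ⟪gradient f xs, z - xs⟫ :=
    IsMinOn.real_inner_gradient_sub_nonneg hxs hXconv hxsX hzX (hf xs)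
  have hgrowth := hsc xs hxsX z hzX
  have hlower := hsc y hy xs hxsX
  have hupper := hsm y hy z hzX
  have hstep := mul_real_inner_sub_le_of_forall_norm_sub_le hXconv hα0 hzX hz hxsX
  have hpolar : α * ‖y - xs‖ ^ 2 = α * (‖y - z‖ ^ 2 - 2 * ⟪y - z, xs - z⟫ + ‖z - xs‖ ^ 2) := by
    rw [norm_sub_rev z xs, ← norm_sub_sq_real, sub_sub_sub_cancel_right]
  have hsplit : ⟪gradient f y, z - y⟫ = ⟪gradient f y, xs - y⟫ - ⟪gradient f y, xs - z⟫ := by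
    rw [← inner_sub_right, sub_sub_sub_cancel_left]
  rw [norm_sub_rev xs y] at hlower
  rw [norm_sub_rev z y] at hupper
  have hLα : L / 2 * ‖y - z‖ ^ 2 ≤ α / 2 * ‖y - z‖ ^ 2 := by gcongr
  rw [div_mul_eq_mul_div, le_div_iff₀ (by positivity)]
  linarith

/-- Exact projected gradient step contraction (Mokhtari et al. / Zhang et al.):
if `z = Proj_X(y − (1/α)∇f(y))`, then `‖z − x*‖² ≤ ((α − μ)/(α + μ))‖y − x*‖²`.
The metric projection is characterized as the nearest point of `X`. -/
theorem stmt_4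
    {E : Type*} [NormedAddCommGroup E] [InnerProductSpace ℝ E] [FiniteDimensional ℝ E]
    (X : Set E) (hXne : X.Nonempty) (hXcp : IsCompact X) (hXconv : Convex ℝ X)
    (f : E → ℝ) (hf : Differentiable ℝ f)
    (μ L : ℝ) (hμ : 0 < μ) (hL : 0 < L)
    (hsc : ∀ a ∈ X, ∀ b ∈ X,
      f a + ⟪gradient f a, b - a⟫ + μ / 2 * ‖b - a‖ ^ 2 ≤ f b)
    (hsm : ∀ a ∈ X, ∀ b ∈ X,
      f b ≤ f a + ⟪gradient f a, b - a⟫ + L / 2 * ‖b - a‖ ^ 2)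
    (xs : E) (hxsX : xs ∈ X) (hxs : ∀ x ∈ X, f xs ≤ f x)
    (y : E) (hy : y ∈ X)
    (α : ℝ) (hα : L ≤ α)
    (z : E) (hzX : z ∈ X)
    (hz : ∀ v ∈ X,
      ‖(y - (1 / α) • gradient f y) - z‖ ≤ ‖(y - (1 / α) • gradient f y) - v‖) :
    ‖z - xs‖ ^ 2 ≤ (α - μ) / (α + μ) * ‖y - xs‖ ^ 2 :=
  stmt_4_general X hXconv f hf μ L hμ hL hsc hsm xs hxsX hxs y hy α hα z hzX hz
end

section
/- Let X ⊆ E be nonempty convex with ‖a − b‖ ≤ R for all a, b ∈ X. For t = 1, …, T, let f_t : E → ℝ be differentiable and L-smooth on X, and let x_t, x_t* ∈ X. Then for any ξ > 0 and any integer τ with 0 ≤ τ ≤ T: Σ_{t=1}^{T} (f_t(x_t) − f_t(x_t*)) ≤ (1/(2ξ)) Σ_{t=1}^{T} ‖∇f_t(x_t*)‖² + ((L + ξ)/2) (τ·R² + Σ_{t=τ+1}^{T} ‖x_t − x_t*‖²). -/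
open scoped RealInnerProductSpace

open Finset

/-
Apply the smoothness inequality at the comparator `x_t*` and bound the linear term by Young's
inequality `⟪g, d⟫ ≤ ‖g‖² / (2ξ) + (ξ/2)‖d‖²`. Summing over `t` gives the claim with
`Σ_{t ≤ T} ‖x_t − x_t*‖²`; the first `τ` of these terms are at most `R²` each.
-/

lemma real_inner_le_inv_mul_norm_sq_add_mul_norm_sq {E : Type*} [NormedAddCommGroup E]
    [InnerProductSpace ℝ E] {ξ : ℝ} (hξ : 0 < ξ) (g d : E) :
    ⟪g, d⟫ ≤ 1 / (2 * ξ) * ‖g‖ ^ 2 + ξ / 2 * ‖d‖ ^ 2 := by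
  have young : ‖g‖ * ‖d‖ ≤ 1 / (2 * ξ) * ‖g‖ ^ 2 + ξ / 2 * ‖d‖ ^ 2 := by
    have hsq : 0 ≤ (‖g‖ - ξ * ‖d‖) ^ 2 / (2 * ξ) := by positivity
    have hexpand : (‖g‖ - ξ * ‖d‖) ^ 2 / (2 * ξ)
        = 1 / (2 * ξ) * ‖g‖ ^ 2 + ξ / 2 * ‖d‖ ^ 2 - ‖g‖ * ‖d‖ := by
      field_simp
      ring
    linarith
  exact (real_inner_le_norm g d).trans young

lemma sub_le_of_smooth_bound {E : Type*} [NormedAddCommGroup E] [InnerProductSpace ℝ E]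
    {φ : E → ℝ} {g a b : E} {L ξ : ℝ} (hξ : 0 < ξ)
    (hsm : φ b ≤ φ a + ⟪g, b - a⟫ + L / 2 * ‖b - a‖ ^ 2) :
    φ b - φ a ≤ 1 / (2 * ξ) * ‖g‖ ^ 2 + (L + ξ) / 2 * ‖b - a‖ ^ 2 := by
  linarith [real_inner_le_inv_mul_norm_sq_add_mul_norm_sq hξ g (b - a)]

lemma sum_Icc_one_le_mul_add_sum_Icc {u : ℕ → ℝ} {C : ℝ} {τ T : ℕ} (hτT : τ ≤ T)
    (hu : ∀ t, 1 ≤ t → t ≤ τ → u t ≤ C) :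
    ∑ t ∈ Icc 1 T, u t ≤ τ * C + ∑ t ∈ Icc (τ + 1) T, u t := by
  have hIcc_one : Icc 1 T = Ioc 0 T := Icc_add_one_left_eq_Ioc 0 T
  rw [hIcc_one, Icc_add_one_left_eq_Ioc, ← sum_Ioc_consecutive u (Nat.zero_le τ) hτT]
  gcongr
  calc ∑ t ∈ Ioc 0 τ, u t ≤ ∑ _t ∈ Ioc 0 τ, C :=
        sum_le_sum fun t ht => hu t (mem_Ioc.mp ht).1 (mem_Ioc.mp ht).2
    _ = τ * C := by simp

theorem stmt_10_general
    {E : Type*} [NormedAddCommGroup E] [InnerProductSpace ℝ E] [FiniteDimensional ℝ E]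
    (X : Set E)
    (R : ℝ) (hR : ∀ a ∈ X, ∀ b ∈ X, ‖a - b‖ ≤ R)
    (T : ℕ) (f : ℕ → E → ℝ) (L : ℝ) (hL : 0 < L)
    (hsm : ∀ t, 1 ≤ t → t ≤ T → ∀ a ∈ X, ∀ b ∈ X,
      f t b ≤ f t a + ⟪gradient (f t) a, b - a⟫ + L / 2 * ‖b - a‖ ^ 2)
    (x xstar : ℕ → E) (hx : ∀ t, 1 ≤ t → t ≤ T → x t ∈ X)
    (hxs : ∀ t, 1 ≤ t → t ≤ T → xstar t ∈ X)
    (ξ : ℝ) (hξ : 0 < ξ) (τ : ℕ) (hτT : τ ≤ T) :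
    ∑ t ∈ Finset.Icc 1 T, (f t (x t) - f t (xstar t))
      ≤ 1 / (2 * ξ) * ∑ t ∈ Finset.Icc 1 T, ‖gradient (f t) (xstar t)‖ ^ 2
        + (L + ξ) / 2
          * ((τ : ℝ) * R ^ 2 + ∑ t ∈ Finset.Icc (τ + 1) T, ‖x t - xstar t‖ ^ 2) := by
  have hdist : ∀ t, 1 ≤ t → t ≤ τ → ‖x t - xstar t‖ ^ 2 ≤ R ^ 2 := fun t h1 h2 =>
    pow_le_pow_left₀ (norm_nonneg _)
      (hR _ (hx t h1 (h2.trans hτT)) _ (hxs t h1 (h2.trans hτT))) 2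
  calc ∑ t ∈ Icc 1 T, (f t (x t) - f t (xstar t))
      ≤ ∑ t ∈ Icc 1 T, (1 / (2 * ξ) * ‖gradient (f t) (xstar t)‖ ^ 2
          + (L + ξ) / 2 * ‖x t - xstar t‖ ^ 2) := by
        refine sum_le_sum fun t ht => ?_
        obtain ⟨h1, h2⟩ := mem_Icc.mp ht
        exact sub_le_of_smooth_bound hξ (hsm t h1 h2 _ (hxs t h1 h2) _ (hx t h1 h2))
    _ = 1 / (2 * ξ) * ∑ t ∈ Icc 1 T, ‖gradient (f t) (xstar t)‖ ^ 2
          + (L + ξ) / 2 * ∑ t ∈ Icc 1 T, ‖x t - xstar t‖ ^ 2 := by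
        rw [sum_add_distrib, mul_sum, mul_sum]
    _ ≤ _ := by
        gcongr ?_ + (L + ξ) / 2 * ?_
        · linarith
        · exact sum_Icc_one_le_mul_add_sum_Icc hτT hdist

/-- Smoothness-based bounding step of the dynamic regret (eq. (17) in the
paper): for any `ξ > 0`,
`Σ_{t=1}^{T} (f_t(x_t) − f_t(x_t*)) ≤ (1/(2ξ)) Σ_{t=1}^{T} ‖∇f_t(x_t*)‖²
  + ((L + ξ)/2)(τR² + Σ_{t=τ+1}^{T} ‖x_t − x_t*‖²)`. -/
theorem stmt_10
    {E : Type*} [NormedAddCommGroup E] [InnerProductSpace ℝ E] [FiniteDimensional ℝ E]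
    (X : Set E) (hXne : X.Nonempty) (hXcp : IsCompact X) (hXconv : Convex ℝ X)
    (R : ℝ) (hR : ∀ a ∈ X, ∀ b ∈ X, ‖a - b‖ ≤ R)
    (T : ℕ) (f : ℕ → E → ℝ) (L : ℝ) (hL : 0 < L)
    (hdiff : ∀ t, 1 ≤ t → t ≤ T → Differentiable ℝ (f t))
    (hsm : ∀ t, 1 ≤ t → t ≤ T → ∀ a ∈ X, ∀ b ∈ X,
      f t b ≤ f t a + ⟪gradient (f t) a, b - a⟫ + L / 2 * ‖b - a‖ ^ 2)
    (x xstar : ℕ → E) (hx : ∀ t, 1 ≤ t → t ≤ T → x t ∈ X)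
    (hxs : ∀ t, 1 ≤ t → t ≤ T → xstar t ∈ X)
    (ξ : ℝ) (hξ : 0 < ξ) (τ : ℕ) (hτT : τ ≤ T) :
    ∑ t ∈ Finset.Icc 1 T, (f t (x t) - f t (xstar t))
      ≤ 1 / (2 * ξ) * ∑ t ∈ Finset.Icc 1 T, ‖gradient (f t) (xstar t)‖ ^ 2
        + (L + ξ) / 2
          * ((τ : ℝ) * R ^ 2 + ∑ t ∈ Finset.Icc (τ + 1) T, ‖x t - xstar t‖ ^ 2) :=
  stmt_10_general X R hR T f L hL hsm x xstar hx hxs ξ hξ τ hτT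
end

section
/- In the HiOCO setting with zero local delay, if additionally 2η^{J_l+J_r} < 1, then for any ξ > 0 the dynamic regret satisfies: Σ_{t=1}^{T} (f_t(x_t) − f_t(x_t*)) ≤ (1/(2ξ)) Σ_{t=1}^{T} ‖∇f_t(x_t*)‖² + ((L + ξ)/2)·τ·R² + ((L + ξ)/(2(1 − 2η^{J_l+J_r}))) · ( τ·R² + 2τ²·Π₂* + (2β/(1 − η))·Δ₂ ). -/
/-!
Each inexact projected gradient step contracts towards the minimiser,
`‖y' - x*‖² ≤ η ‖y - x*‖² + β δ²`: the three-point inequality of the projection, strong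
convexity, `L`-smoothness with `L ≤ α`, quadratic growth at the constrained minimiser and Young's
inequality `⟪g - ∇f y, ·⟫ ≤ δ²/(2γ) + (γ/2)‖·‖²` for the gradient error combine into
`(α + μ - γ) ‖y' - x*‖² ≤ (α - μ) ‖y - x*‖² + δ²/γ`.

In round `t` the `J_r` master steps contract towards `x*_{t-τ}` and the `J_l` worker steps towards
`x*_t`; switching the target costs a factor `2` through `‖p + q‖² ≤ 2‖p‖² + 2‖q‖²`. Hence the
tracking error `e_t = ‖x_t - x*_t‖²` satisfies `e_t ≤ 2 η^J e_{t-τ} + r_t`, where `r_t` collects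
the drift `2‖x*_t - x*_{t-τ}‖²` and the gradient errors. Summing over `t > τ`, the lagged errors
are at most the total, and since `2 η^J < 1` the sum can be solved for; the first `τ` rounds
contribute at most `τ R²`, and by Cauchy–Schwarz the drift over a lag `τ` is at most `τ²` times the
squared path length. Finally smoothness and Young's inequality bound the regret of each round by
`‖∇f_t(x*_t)‖²/(2ξ) + ((L + ξ)/2) e_t`.
-/

open scoped RealInnerProductSpace

open Finset

theorem le_pow_mul_add_of_le_mul_add {a : ℕ → ℝ} {η c : ℝ} (hη0 : 0 ≤ η) (hη1 : η < 1) {J : ℕ}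
    (h : ∀ j < J, a (j + 1) ≤ η * a j + c) : a J ≤ η ^ J * a 0 + (1 - η ^ J) / (1 - η) * c := by
  induction J with
  | zero => simp
  | succ J ih =>
    have hη : 1 - η ≠ 0 := by linarith
    calc a (J + 1) ≤ η * a J + c := h J (by omega)
      _ ≤ η * (η ^ J * a 0 + (1 - η ^ J) / (1 - η) * c) + c := by
        gcongr
        exact ih fun j hj => h j (by omega)
      _ = η ^ (J + 1) * a 0 + (1 - η ^ (J + 1)) / (1 - η) * c := by
        field_simp
        ring

theorem contraction_rate_mem_Ico {μ α γ : ℝ} (hμα : μ ≤ α) (hγ : γ < 2 * μ) :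
    (α - μ) / (α + μ - γ) ∈ Set.Ico 0 1 :=
  ⟨div_nonneg (by linarith) (by linarith), (div_lt_one (by linarith)).2 (by linarith)⟩

theorem sq_norm_sub_le_of_two_stage {E : Type*} [SeminormedAddCommGroup E] {y z : ℕ → E}
    {a b : E} {η β δ₁ δ₂ : ℝ} {Jr Jl : ℕ} (hη0 : 0 ≤ η) (hη1 : η < 1) (hβ : 0 ≤ β)
    (hy : ∀ j < Jr, ‖y (j + 1) - a‖ ^ 2 ≤ η * ‖y j - a‖ ^ 2 + β * δ₁ ^ 2) (hz0 : z 0 = y Jr)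
    (hz : ∀ j < Jl, ‖z (j + 1) - b‖ ^ 2 ≤ η * ‖z j - b‖ ^ 2 + β * δ₂ ^ 2) :
    ‖z Jl - b‖ ^ 2 ≤ 2 * η ^ (Jl + Jr) * ‖y 0 - a‖ ^ 2
      + (2 * ‖b - a‖ ^ 2 + β / (1 - η) * (2 * η ^ Jl * δ₁ ^ 2 + (1 - η ^ Jl) * δ₂ ^ 2)) := by
  have hmaster := le_pow_mul_add_of_le_mul_add (a := fun j => ‖y j - a‖ ^ 2) hη0 hη1 hy
  have hworker := le_pow_mul_add_of_le_mul_add (a := fun j => ‖z j - b‖ ^ 2) hη0 hη1 hz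
  have hcross : ‖y Jr - b‖ ^ 2 ≤ 2 * (‖y Jr - a‖ ^ 2 + ‖b - a‖ ^ 2) := by
    have htri : ‖y Jr - b‖ ≤ ‖y Jr - a‖ + ‖b - a‖ := by
      simpa only [norm_sub_rev a b] using norm_sub_le_norm_sub_add_norm_sub (y Jr) a b
    exact (pow_le_pow_left₀ (norm_nonneg _) htri 2).trans add_sq_le
  simp only [hz0] at hworker
  have hq0 : 0 ≤ η ^ Jl := pow_nonneg hη0 _
  have hq1 : η ^ Jl ≤ 1 := pow_le_one₀ hη0 hη1.le
  have hD₁ : 0 ≤ η ^ Jl * η ^ Jr * (β * δ₁ ^ 2 / (1 - η)) := by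
    have : 0 < 1 - η := by linarith
    positivity
  have hpath : η ^ Jl * ‖b - a‖ ^ 2 ≤ ‖b - a‖ ^ 2 := mul_le_of_le_one_left (sq_nonneg _) hq1
  calc ‖z Jl - b‖ ^ 2
      ≤ η ^ Jl * (2 * ((η ^ Jr * ‖y 0 - a‖ ^ 2 + (1 - η ^ Jr) / (1 - η) * (β * δ₁ ^ 2))
          + ‖b - a‖ ^ 2)) + (1 - η ^ Jl) / (1 - η) * (β * δ₂ ^ 2) := by
        refine hworker.trans ?_
        gcongr
        exact hcross.trans (by gcongr)
    _ ≤ _ := by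
        rw [pow_add]
        linear_combination 2 * hpath + 2 * hD₁

section InnerProductSpace

variable {E : Type*} [NormedAddCommGroup E] [InnerProductSpace ℝ E]

theorem real_inner_le_norm_sq_div_add (v w : E) {c : ℝ} (hc : 0 < c) :
    ⟪v, w⟫ ≤ ‖v‖ ^ 2 / (2 * c) + c / 2 * ‖w‖ ^ 2 := by
  have hsq : ‖v‖ ^ 2 / (2 * c) + c / 2 * ‖w‖ ^ 2 - ‖v‖ * ‖w‖
      = (‖v‖ - c * ‖w‖) ^ 2 / (2 * c) := by
    field_simp
    ring
  have : 0 ≤ (‖v‖ - c * ‖w‖) ^ 2 / (2 * c) := by positivity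
  linarith [real_inner_le_norm v w]

theorem Convex.inner_sub_nonpos_of_forall_norm_sub_le {K : Set E} (hK : Convex ℝ K) {u v : E}
    (hv : v ∈ K) (hmin : ∀ w ∈ K, ‖u - v‖ ≤ ‖u - w‖) {w : E} (hw : w ∈ K) :
    ⟪u - v, w - v⟫ ≤ 0 := by
  have : Nonempty K := ⟨⟨v, hv⟩⟩
  have hinf : ‖u - v‖ = ⨅ w : K, ‖u - w‖ :=
    le_antisymm (le_ciInf fun w => hmin w w.2)
      (ciInf_le (f := fun w : K => ‖u - w‖) ⟨0, Set.forall_mem_range.2 fun _ => norm_nonneg _⟩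
        ⟨v, hv⟩)
  exact (norm_eq_iInf_iff_real_inner_le_zero hK hv).1 hinf w hw

theorem Convex.three_point_of_forall_norm_sub_le {K : Set E} (hK : Convex ℝ K) {α : ℝ}
    (hα : 0 < α) {y g y' : E} (hy' : y' ∈ K)
    (hproj : ∀ v ∈ K, ‖(y - (1 / α) • g) - y'‖ ≤ ‖(y - (1 / α) • g) - v‖) {v : E} (hv : v ∈ K) :
    α / 2 * (‖y - y'‖ ^ 2 + ‖y' - v‖ ^ 2 - ‖y - v‖ ^ 2) ≤ ⟪g, v - y'⟫ := by
  have hvi := hK.inner_sub_nonpos_of_forall_norm_sub_le hy' hproj hv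
  rw [show y - (1 / α) • g - y' = (y - y') - (1 / α) • g by abel, inner_sub_left,
    real_inner_smul_left] at hvi
  have hpar : 2 * ⟪y - y', v - y'⟫ = ‖y - y'‖ ^ 2 + ‖y' - v‖ ^ 2 - ‖y - v‖ ^ 2 := by
    rw [show y - v = (y - y') - (v - y') by abel, norm_sub_sq_real (y - y') (v - y'),
      norm_sub_rev y' v]
    ring
  have := mul_le_mul_of_nonneg_left hvi hα.le
  rw [mul_sub, ← mul_assoc, mul_one_div_cancel hα.ne', one_mul, mul_zero, sub_nonpos] at this
  linear_combination this - α / 2 * hpar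

theorem IsMinOn.inner_gradient_nonneg [CompleteSpace E] {K : Set E} (hK : Convex ℝ K)
    {f : E → ℝ} {a : E} (ha : a ∈ K) (hmin : IsMinOn f K a) (hf : DifferentiableAt ℝ f a)
    {v : E} (hv : v ∈ K) :
    0 ≤ ⟪gradient f a, v - a⟫ := by
  have := hmin.localize.hasFDerivWithinAt_nonneg hf.hasFDerivAt.hasFDerivWithinAt
    (sub_mem_posTangentConeAt_of_segment_subset (hK.segment_subset ha hv))
  rwa [gradient, InnerProductSpace.toDual_symm_apply]

structure StronglyConvexSmoothOn [CompleteSpace E] (X : Set E) (μ L : ℝ) (f : E → ℝ) : Prop where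
  differentiable : Differentiable ℝ f
  lower_bound : ∀ a ∈ X, ∀ b ∈ X, f a + ⟪gradient f a, b - a⟫ + μ / 2 * ‖b - a‖ ^ 2 ≤ f b
  upper_bound : ∀ a ∈ X, ∀ b ∈ X, f b ≤ f a + ⟪gradient f a, b - a⟫ + L / 2 * ‖b - a‖ ^ 2

def IsInexactProjGradStep (X : Set E) (α δ : ℝ) (G : E → E) (y y' : E) : Prop :=
  ∃ g : E, ‖g - G y‖ ≤ δ ∧ y' ∈ X ∧
    ∀ v ∈ X, ‖(y - (1 / α) • g) - y'‖ ≤ ‖(y - (1 / α) • g) - v‖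

theorem IsInexactProjGradStep.mem {X : Set E} {α δ : ℝ} {G : E → E} {y y' : E}
    (h : IsInexactProjGradStep X α δ G y y') : y' ∈ X :=
  let ⟨_, _, hy', _⟩ := h
  hy'

theorem IsInexactProjGradStep.mem_of_chain {X : Set E} {α δ : ℝ} {G : E → E} {w : ℕ → E} {J : ℕ}
    (hw0 : w 0 ∈ X) (hw : ∀ j, 1 ≤ j → j ≤ J → IsInexactProjGradStep X α δ G (w (j - 1)) (w j)) :
    ∀ j ≤ J, w j ∈ X
  | 0, _ => hw0
  | j + 1, hj => (hw (j + 1) (by omega) hj).mem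

variable [CompleteSpace E] {X : Set E} {μ L : ℝ} {f : E → ℝ}

theorem StronglyConvexSmoothOn.sub_le_norm_sq_gradient_add (hf : StronglyConvexSmoothOn X μ L f)
    {a b : E} (ha : a ∈ X) (hb : b ∈ X) {ξ : ℝ} (hξ : 0 < ξ) :
    f b - f a ≤ 1 / (2 * ξ) * ‖gradient f a‖ ^ 2 + (L + ξ) / 2 * ‖b - a‖ ^ 2 := by
  have hamgm := real_inner_le_norm_sq_div_add (gradient f a) (b - a) hξ
  have hup := hf.upper_bound a ha b hb
  rw [one_div_mul_eq_div]
  linarith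

theorem StronglyConvexSmoothOn.quadratic_growth (hX : Convex ℝ X)
    (hf : StronglyConvexSmoothOn X μ L f) {xs : E} (hxs : xs ∈ X) (hmin : IsMinOn f X xs)
    {v : E} (hv : v ∈ X) : μ / 2 * ‖v - xs‖ ^ 2 ≤ f v - f xs := by
  have := hmin.inner_gradient_nonneg hX hxs (hf.differentiable xs) hv
  linarith [hf.lower_bound xs hxs v hv]

theorem IsInexactProjGradStep.sq_norm_sub_le (hX : Convex ℝ X) {α γ : ℝ} (hα : 0 < α)
    (hLα : L ≤ α) (hγ0 : 0 < γ) (hγ : γ < α + μ) (hf : StronglyConvexSmoothOn X μ L f)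
    {xs : E} (hxs : xs ∈ X) (hmin : IsMinOn f X xs) {δ : ℝ} {y y' : E} (hy : y ∈ X)
    (hstep : IsInexactProjGradStep X α δ (gradient f) y y') :
    ‖y' - xs‖ ^ 2 ≤ (α - μ) / (α + μ - γ) * ‖y - xs‖ ^ 2 + 1 / (γ * (α + μ - γ)) * δ ^ 2 := by
  obtain ⟨g, hg, hy', hproj⟩ := hstep
  have hthree := hX.three_point_of_forall_norm_sub_le hα hy' hproj hxs
  have hsplit : ⟪g, xs - y'⟫
      = ⟪gradient f y, xs - y⟫ - ⟪gradient f y, y' - y⟫ + ⟪g - gradient f y, xs - y'⟫ := by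
    rw [inner_sub_left, ← inner_sub_right, show xs - y - (y' - y) = xs - y' by abel]
    ring
  have herr : ⟪g - gradient f y, xs - y'⟫ ≤ δ ^ 2 / (2 * γ) + γ / 2 * ‖y' - xs‖ ^ 2 := by
    have hsq : ‖g - gradient f y‖ ^ 2 ≤ δ ^ 2 := pow_le_pow_left₀ (norm_nonneg _) hg 2
    have := real_inner_le_norm_sq_div_add (g - gradient f y) (xs - y') hγ0
    rw [norm_sub_rev xs y'] at this
    linarith [div_le_div_of_nonneg_right hsq (by positivity : (0 : ℝ) ≤ 2 * γ)]
  have hlower := hf.lower_bound y hy xs hxs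
  have hupper := hf.upper_bound y hy y' hy'
  have hgrowth := hf.quadratic_growth hX hxs hmin hy'
  have hLα' : L * ‖y - y'‖ ^ 2 ≤ α * ‖y - y'‖ ^ 2 := mul_le_mul_of_nonneg_right hLα (sq_nonneg _)
  rw [norm_sub_rev xs y] at hlower
  rw [norm_sub_rev y' y] at hupper
  have key : (α + μ - γ) * ‖y' - xs‖ ^ 2 ≤ (α - μ) * ‖y - xs‖ ^ 2 + δ ^ 2 / γ := by
    linear_combination 2 * hthree + 2 * hsplit + 2 * herr + 2 * hlower + 2 * hupper
      + 2 * hgrowth + hLα'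
  have hK : 0 < α + μ - γ := by linarith
  calc ‖y' - xs‖ ^ 2 ≤ ((α - μ) * ‖y - xs‖ ^ 2 + δ ^ 2 / γ) / (α + μ - γ) := by
        rwa [le_div_iff₀' hK]
    _ = _ := by field_simp

theorem IsInexactProjGradStep.sq_norm_sub_le_of_chain (hX : Convex ℝ X) {α γ : ℝ} (hα : 0 < α)
    (hLα : L ≤ α) (hγ0 : 0 < γ) (hγ : γ < α + μ) (hf : StronglyConvexSmoothOn X μ L f)
    {xs : E} (hxs : xs ∈ X) (hmin : IsMinOn f X xs) {δ : ℝ} {w : ℕ → E} {J : ℕ}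
    (hw0 : w 0 ∈ X)
    (hw : ∀ j, 1 ≤ j → j ≤ J → IsInexactProjGradStep X α δ (gradient f) (w (j - 1)) (w j)) :
    ∀ j < J, ‖w (j + 1) - xs‖ ^ 2
      ≤ (α - μ) / (α + μ - γ) * ‖w j - xs‖ ^ 2 + 1 / (γ * (α + μ - γ)) * δ ^ 2 := fun j hj =>
  (hw (j + 1) (by omega) hj).sq_norm_sub_le hX hα hLα hγ0 hγ hf hxs hmin
    (mem_of_chain hw0 hw j hj.le)

theorem sq_norm_sub_le_of_hierarchical_round (hX : Convex ℝ X) {α γ : ℝ} (hμL : μ ≤ L)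
    (hLα : L ≤ α) (hγ0 : 0 < γ) (hγ : γ < 2 * μ) {f₁ f₂ : E → ℝ}
    (hf₁ : StronglyConvexSmoothOn X μ L f₁) (hf₂ : StronglyConvexSmoothOn X μ L f₂) {a b : E}
    (ha : a ∈ X) (hmin₁ : IsMinOn f₁ X a) (hb : b ∈ X) (hmin₂ : IsMinOn f₂ X b) {δ₁ δ₂ : ℝ}
    {Jr Jl : ℕ} {y z : ℕ → E} (hy0 : y 0 ∈ X)
    (hy : ∀ j, 1 ≤ j → j ≤ Jr → IsInexactProjGradStep X α δ₁ (gradient f₁) (y (j - 1)) (y j))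
    (hz0 : z 0 = y Jr)
    (hz : ∀ j, 1 ≤ j → j ≤ Jl → IsInexactProjGradStep X α δ₂ (gradient f₂) (z (j - 1)) (z j)) :
    ‖z Jl - b‖ ^ 2 ≤ 2 * ((α - μ) / (α + μ - γ)) ^ (Jl + Jr) * ‖y 0 - a‖ ^ 2
      + (2 * ‖b - a‖ ^ 2 + 1 / (γ * (α + μ - γ)) / (1 - (α - μ) / (α + μ - γ))
        * (2 * ((α - μ) / (α + μ - γ)) ^ Jl * δ₁ ^ 2
          + (1 - ((α - μ) / (α + μ - γ)) ^ Jl) * δ₂ ^ 2)) := by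
  obtain ⟨hη0, hη1⟩ := contraction_rate_mem_Ico (hμL.trans hLα) hγ
  have hα : 0 < α := by linarith
  have hβ : 0 ≤ 1 / (γ * (α + μ - γ)) := one_div_nonneg.2 (mul_nonneg hγ0.le (by linarith))
  have hz0X : z 0 ∈ X := hz0 ▸ IsInexactProjGradStep.mem_of_chain hy0 hy Jr le_rfl
  exact sq_norm_sub_le_of_two_stage hη0 hη1 hβ
    (IsInexactProjGradStep.sq_norm_sub_le_of_chain hX hα hLα hγ0 (by linarith) hf₁ ha hmin₁ hy0 hy)
    hz0 (IsInexactProjGradStep.sq_norm_sub_le_of_chain hX hα hLα hγ0 (by linarith) hf₂ hb hmin₂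
      hz0X hz)

end InnerProductSpace

theorem Finset.sum_comp_sub_le_sum {F : ℕ → ℝ} (hF : ∀ t, 0 ≤ F t) {A B : Finset ℕ} {c : ℕ}
    (hc : ∀ t ∈ A, c ≤ t) (hAB : ∀ t ∈ A, t - c ∈ B) :
    ∑ t ∈ A, F (t - c) ≤ ∑ s ∈ B, F s := by
  rw [← sum_image fun t ht t' ht' h => by have := hc t ht; have := hc t' ht'; omega]
  exact sum_le_sum_of_subset_of_nonneg (by simpa [subset_iff] using hAB) fun _ _ _ => hF _

theorem sum_Icc_sq_norm_sub_sub_le {E : Type*} [SeminormedAddCommGroup E] (u : ℕ → E)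
    (τ T : ℕ) :
    ∑ t ∈ Icc (τ + 1) T, ‖u t - u (t - τ)‖ ^ 2
      ≤ (τ : ℝ) ^ 2 * ∑ t ∈ Icc 2 T, ‖u t - u (t - 1)‖ ^ 2 := by
  set d : ℕ → ℝ := fun s => ‖u s - u (s - 1)‖ ^ 2
  have hwindow : ∀ t, ‖u t - u (t - τ)‖ ^ 2 ≤ τ * ∑ k ∈ range τ, d (t - k) := fun t => by
    have htele : u t - u (t - τ) = ∑ k ∈ range τ, (u (t - k) - u (t - k - 1)) := by
      simp_rw [Nat.sub_sub]
      simpa using (sum_range_sub' (fun k => u (t - k)) τ).symm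
    calc ‖u t - u (t - τ)‖ ^ 2 ≤ (∑ k ∈ range τ, ‖u (t - k) - u (t - k - 1)‖) ^ 2 := by
          rw [htele]; gcongr; exact norm_sum_le _ _
      _ ≤ τ * ∑ k ∈ range τ, d (t - k) := by
          simpa using sq_sum_le_card_mul_sum_sq (s := range τ)
            (f := fun k => ‖u (t - k) - u (t - k - 1)‖)
  have hslice : ∀ k ∈ range τ, ∑ t ∈ Icc (τ + 1) T, d (t - k) ≤ ∑ s ∈ Icc 2 T, d s :=
    fun k hk => by
      rw [mem_range] at hk
      refine sum_comp_sub_le_sum (F := d) (fun _ => sq_nonneg _) (fun t ht => ?_)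
        (fun t ht => ?_) <;> simp only [mem_Icc] at ht ⊢ <;> omega
  calc ∑ t ∈ Icc (τ + 1) T, ‖u t - u (t - τ)‖ ^ 2
      ≤ ∑ t ∈ Icc (τ + 1) T, τ * ∑ k ∈ range τ, d (t - k) := sum_le_sum fun t _ => hwindow t
    _ = τ * ∑ k ∈ range τ, ∑ t ∈ Icc (τ + 1) T, d (t - k) := by rw [← mul_sum, sum_comm]
    _ ≤ τ * ∑ _k ∈ range τ, ∑ s ∈ Icc 2 T, d s := by gcongr with k hk; exact hslice k hk
    _ = (τ : ℝ) ^ 2 * ∑ t ∈ Icc 2 T, ‖u t - u (t - 1)‖ ^ 2 := by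
      rw [sum_const, card_range, nsmul_eq_mul]
      ring

theorem sum_Icc_drift_le {E : Type*} [SeminormedAddCommGroup E] (u : ℕ → E) (δ : ℕ → ℝ)
    (τ T : ℕ) {κ q : ℝ} (hκ : 0 ≤ κ) (hq0 : 0 ≤ q) (hq1 : q ≤ 1) :
    ∑ t ∈ Icc (τ + 1) T,
        (2 * ‖u t - u (t - τ)‖ ^ 2 + κ * (2 * q * δ (t - τ) ^ 2 + (1 - q) * δ t ^ 2))
      ≤ 2 * (τ : ℝ) ^ 2 * ∑ t ∈ Icc 2 T, ‖u t - u (t - 1)‖ ^ 2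
        + 2 * κ * ∑ t ∈ Icc 1 T, δ t ^ 2 := by
  simp only [sum_add_distrib, ← mul_sum]
  have hpath := sum_Icc_sq_norm_sub_sub_le u τ T
  have hlag : ∑ t ∈ Icc (τ + 1) T, δ (t - τ) ^ 2 ≤ ∑ t ∈ Icc 1 T, δ t ^ 2 :=
    sum_comp_sub_le_sum (F := fun t => δ t ^ 2) (fun _ => sq_nonneg _)
      (fun t ht => by rw [mem_Icc] at ht; omega) (fun t ht => by rw [mem_Icc] at ht ⊢; omega)
  have hcur : ∑ t ∈ Icc (τ + 1) T, δ t ^ 2 ≤ ∑ t ∈ Icc 1 T, δ t ^ 2 :=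
    sum_le_sum_of_subset_of_nonneg (Icc_subset_Icc (by omega) le_rfl) fun _ _ _ => sq_nonneg _
  have hS : 0 ≤ ∑ t ∈ Icc 1 T, δ t ^ 2 := sum_nonneg fun t _ => sq_nonneg (δ t)
  have hmix : 2 * q * ∑ t ∈ Icc (τ + 1) T, δ (t - τ) ^ 2 + (1 - q) * ∑ t ∈ Icc (τ + 1) T, δ t ^ 2
      ≤ 2 * ∑ t ∈ Icc 1 T, δ t ^ 2 := by
    linarith [mul_le_mul_of_nonneg_left hlag hq0, mul_le_mul_of_nonneg_left hcur (sub_nonneg.2 hq1),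
      mul_nonneg hq0 hS, mul_nonneg (sub_nonneg.2 hq1) hS]
  linarith [mul_le_mul_of_nonneg_left hmix hκ]

theorem sum_Icc_le_of_le_mul_sub_add {e r : ℕ → ℝ} {τ T : ℕ} {ρ H : ℝ} (he : ∀ t, 0 ≤ e t)
    (hρ0 : 0 ≤ ρ) (hρ1 : ρ < 1) (hτT : τ ≤ T) (hhead : ∀ t ∈ Icc 1 τ, e t ≤ H)
    (hrec : ∀ t ∈ Icc (τ + 1) T, e t ≤ ρ * e (t - τ) + r t) :
    ∑ t ∈ Icc 1 T, e t ≤ τ * H + (τ * H + ∑ t ∈ Icc (τ + 1) T, r t) / (1 - ρ) := by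
  have hsplit : ∑ t ∈ Icc 1 T, e t = ∑ t ∈ Icc 1 τ, e t + ∑ t ∈ Icc (τ + 1) T, e t := by
    have := sum_Ioc_consecutive e (Nat.zero_le τ) hτT
    rw [← Icc_add_one_left_eq_Ioc, ← Icc_add_one_left_eq_Ioc, ← Icc_add_one_left_eq_Ioc,
      zero_add] at this
    exact this.symm
  have hlag : ∑ t ∈ Icc (τ + 1) T, e (t - τ) ≤ ∑ t ∈ Icc 1 T, e t :=
    sum_comp_sub_le_sum he (fun t ht => by rw [mem_Icc] at ht; omega)
      (fun t ht => by rw [mem_Icc] at ht ⊢; omega)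
  rw [hsplit] at hlag ⊢
  have htail := sum_le_sum hrec
  rw [sum_add_distrib, ← mul_sum] at htail
  have hhead' : ∑ t ∈ Icc 1 τ, e t ≤ τ * H := by
    simpa using sum_le_card_nsmul _ _ _ hhead
  have hH : 0 ≤ τ * H := (sum_nonneg fun t _ => he t).trans hhead'
  have htail' : ∑ t ∈ Icc (τ + 1) T, e t ≤ (τ * H + ∑ t ∈ Icc (τ + 1) T, r t) / (1 - ρ) := by
    rw [le_div_iff₀' (by linarith)]
    linarith [mul_le_mul_of_nonneg_left hlag hρ0, mul_le_mul_of_nonneg_left hhead' hρ0,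
      mul_le_mul_of_nonneg_right hρ1.le hH]
  linarith

theorem stmt_13_general
    {E : Type*} [NormedAddCommGroup E] [InnerProductSpace ℝ E] [FiniteDimensional ℝ E]
    (X : Set E) (hXconv : Convex ℝ X)
    (R : ℝ) (hR : ∀ a ∈ X, ∀ b ∈ X, ‖a - b‖ ≤ R)
    (T τ Jr Jl : ℕ) (hτT : τ < T)
    (μ L α γ : ℝ) (hμL : μ ≤ L) (hLα : L ≤ α)
    (hγ0 : 0 < γ) (hγ : γ < 2 * μ)
    (f : ℕ → E → ℝ) (hdiff : ∀ t, 1 ≤ t → t ≤ T → Differentiable ℝ (f t))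
    (hsc : ∀ t, 1 ≤ t → t ≤ T → ∀ a ∈ X, ∀ b ∈ X,
      f t a + ⟪gradient (f t) a, b - a⟫ + μ / 2 * ‖b - a‖ ^ 2 ≤ f t b)
    (hsm : ∀ t, 1 ≤ t → t ≤ T → ∀ a ∈ X, ∀ b ∈ X,
      f t b ≤ f t a + ⟪gradient (f t) a, b - a⟫ + L / 2 * ‖b - a‖ ^ 2)
    (xstar : ℕ → E) (hxsX : ∀ t, 1 ≤ t → t ≤ T → xstar t ∈ X)
    (hxsmin : ∀ t, 1 ≤ t → t ≤ T → ∀ x ∈ X, f t (xstar t) ≤ f t x)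
    (δ : ℕ → ℝ)
    (x : ℕ → E) (hxX : ∀ t, 1 ≤ t → t ≤ T → x t ∈ X)
    (hiter : ∀ t, τ < t → t ≤ T → ∃ y z : ℕ → E,
      y 0 = x (t - τ) ∧
      (∀ j, 1 ≤ j → j ≤ Jr → ∃ g : E,
        ‖g - gradient (f (t - τ)) (y (j - 1))‖ ≤ δ (t - τ) ∧ y j ∈ X ∧
        ∀ v ∈ X, ‖(y (j - 1) - (1 / α) • g) - y j‖ ≤ ‖(y (j - 1) - (1 / α) • g) - v‖) ∧
      z 0 = y Jr ∧
      (∀ j, 1 ≤ j → j ≤ Jl → ∃ g : E,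
        ‖g - gradient (f t) (z (j - 1))‖ ≤ δ t ∧ z j ∈ X ∧
        ∀ v ∈ X, ‖(z (j - 1) - (1 / α) • g) - z j‖ ≤ ‖(z (j - 1) - (1 / α) • g) - v‖) ∧
      x t = z Jl)
    (hη : 2 * ((α - μ) / (α + μ - γ)) ^ (Jl + Jr) < 1)
    (ξ : ℝ) (hξ : 0 < ξ) :
    ∑ t ∈ Finset.Icc 1 T, (f t (x t) - f t (xstar t))
      ≤ 1 / (2 * ξ) * ∑ t ∈ Finset.Icc 1 T, ‖gradient (f t) (xstar t)‖ ^ 2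
        + (L + ξ) / 2 * (τ : ℝ) * R ^ 2
        + (L + ξ) / (2 * (1 - 2 * ((α - μ) / (α + μ - γ)) ^ (Jl + Jr)))
          * ((τ : ℝ) * R ^ 2
            + 2 * (τ : ℝ) ^ 2 * ∑ t ∈ Finset.Icc 2 T, ‖xstar t - xstar (t - 1)‖ ^ 2
            + 2 * (1 / (γ * (α + μ - γ))) / (1 - (α - μ) / (α + μ - γ))
              * ∑ t ∈ Finset.Icc 1 T, (δ t) ^ 2) := by
  obtain ⟨hη0, hη1⟩ := contraction_rate_mem_Ico (hμL.trans hLα) hγ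
  set η := (α - μ) / (α + μ - γ)
  set β := 1 / (γ * (α + μ - γ))
  have hκ : 0 ≤ β / (1 - η) :=
    div_nonneg (one_div_nonneg.2 (mul_nonneg hγ0.le (by linarith))) (by linarith)
  have hreg : ∀ t, 1 ≤ t → t ≤ T → StronglyConvexSmoothOn X μ L (f t) :=
    fun t h₁ h₂ => ⟨hdiff t h₁ h₂, hsc t h₁ h₂, hsm t h₁ h₂⟩
  have hround : ∀ t ∈ Icc (τ + 1) T, ‖x t - xstar t‖ ^ 2
      ≤ 2 * η ^ (Jl + Jr) * ‖x (t - τ) - xstar (t - τ)‖ ^ 2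
        + (2 * ‖xstar t - xstar (t - τ)‖ ^ 2
          + β / (1 - η) * (2 * η ^ Jl * δ (t - τ) ^ 2 + (1 - η ^ Jl) * δ t ^ 2)) := by
    intro t ht
    obtain ⟨hτt, htT⟩ := mem_Icc.1 ht
    obtain ⟨y, z, hy0, hy, hz0, hz, hxt⟩ := hiter t hτt htT
    obtain ⟨hs₁, hs₂⟩ : 1 ≤ t - τ ∧ t - τ ≤ T := by omega
    have ht₁ : 1 ≤ t := by omega
    rw [hxt, ← hy0]
    exact sq_norm_sub_le_of_hierarchical_round hXconv hμL hLα hγ0 hγ (hreg _ hs₁ hs₂)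
      (hreg t ht₁ htT) (hxsX _ hs₁ hs₂) (isMinOn_iff.2 (hxsmin _ hs₁ hs₂)) (hxsX t ht₁ htT)
      (isMinOn_iff.2 (hxsmin t ht₁ htT)) (hy0 ▸ hxX _ hs₁ hs₂) hy hz0 hz
  have hhead : ∀ t ∈ Icc 1 τ, ‖x t - xstar t‖ ^ 2 ≤ R ^ 2 := fun t ht => by
    rw [mem_Icc] at ht
    exact pow_le_pow_left₀ (norm_nonneg _)
      (hR _ (hxX t ht.1 (by omega)) _ (hxsX t ht.1 (by omega))) 2
  have htrack := sum_Icc_le_of_le_mul_sub_add (fun t => sq_nonneg _) (by positivity) hη hτT.le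
    hhead hround
  have hregret : ∀ t ∈ Icc 1 T, f t (x t) - f t (xstar t)
      ≤ 1 / (2 * ξ) * ‖gradient (f t) (xstar t)‖ ^ 2 + (L + ξ) / 2 * ‖x t - xstar t‖ ^ 2 :=
    fun t ht => by
      rw [mem_Icc] at ht
      exact (hreg t ht.1 ht.2).sub_le_norm_sq_gradient_add (hxsX t ht.1 ht.2) (hxX t ht.1 ht.2) hξ
  have hdrift := sum_Icc_drift_le xstar δ τ T hκ (pow_nonneg hη0 Jl) (pow_le_one₀ hη0 hη1.le)
  calc ∑ t ∈ Icc 1 T, (f t (x t) - f t (xstar t))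
      ≤ 1 / (2 * ξ) * ∑ t ∈ Icc 1 T, ‖gradient (f t) (xstar t)‖ ^ 2
          + (L + ξ) / 2 * ∑ t ∈ Icc 1 T, ‖x t - xstar t‖ ^ 2 := by
        rw [mul_sum, mul_sum, ← sum_add_distrib]
        exact sum_le_sum hregret
    _ ≤ 1 / (2 * ξ) * ∑ t ∈ Icc 1 T, ‖gradient (f t) (xstar t)‖ ^ 2
          + (L + ξ) / 2 * (τ * R ^ 2 + (τ * R ^ 2
            + (2 * (τ : ℝ) ^ 2 * ∑ t ∈ Icc 2 T, ‖xstar t - xstar (t - 1)‖ ^ 2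
              + 2 * (β / (1 - η)) * ∑ t ∈ Icc 1 T, δ t ^ 2)) / (1 - 2 * η ^ (Jl + Jr))) := by
      gcongr
      · linarith
      · exact htrack.trans (by gcongr)
    _ = _ := by
      field_simp
      ring

/-- Theorem 1(ii) of the paper: squared-variation dynamic regret bound for
HiOCO with zero local delay. With `η = (α − μ)/(α + μ − γ)` and
`β = 1/(γ(α + μ − γ))`, if `2η^{J_l+J_r} < 1` then for any `ξ > 0`,
`Σ_{t=1}^{T} (f_t(x_t) − f_t(x_t*)) ≤ (1/(2ξ)) Σ_t ‖∇f_t(x_t*)‖²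
  + ((L+ξ)/2)τR² + ((L+ξ)/(2(1 − 2η^{J_l+J_r})))(τR² + 2τ²Π₂* + (2β/(1−η))Δ₂)`. -/
theorem stmt_13
    {E : Type*} [NormedAddCommGroup E] [InnerProductSpace ℝ E] [FiniteDimensional ℝ E]
    (X : Set E) (hXne : X.Nonempty) (hXcp : IsCompact X) (hXconv : Convex ℝ X)
    (R : ℝ) (hR : ∀ a ∈ X, ∀ b ∈ X, ‖a - b‖ ≤ R)
    (T τ Jr Jl : ℕ) (hT : 1 ≤ T) (hτ1 : 1 ≤ τ) (hτT : τ < T) (hJ : 1 ≤ Jr + Jl)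
    (μ L α γ : ℝ) (hμ : 0 < μ) (hμL : μ ≤ L) (hLα : L ≤ α)
    (hγ0 : 0 < γ) (hγ : γ < 2 * μ)
    (f : ℕ → E → ℝ) (hdiff : ∀ t, 1 ≤ t → t ≤ T → Differentiable ℝ (f t))
    (hsc : ∀ t, 1 ≤ t → t ≤ T → ∀ a ∈ X, ∀ b ∈ X,
      f t a + ⟪gradient (f t) a, b - a⟫ + μ / 2 * ‖b - a‖ ^ 2 ≤ f t b)
    (hsm : ∀ t, 1 ≤ t → t ≤ T → ∀ a ∈ X, ∀ b ∈ X,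
      f t b ≤ f t a + ⟪gradient (f t) a, b - a⟫ + L / 2 * ‖b - a‖ ^ 2)
    (D : ℝ) (hD : ∀ t, 1 ≤ t → t ≤ T → ∀ x ∈ X, ‖gradient (f t) x‖ ≤ D)
    (xstar : ℕ → E) (hxsX : ∀ t, 1 ≤ t → t ≤ T → xstar t ∈ X)
    (hxsmin : ∀ t, 1 ≤ t → t ≤ T → ∀ x ∈ X, f t (xstar t) ≤ f t x)
    (δ : ℕ → ℝ) (hδ : ∀ t, 1 ≤ t → t ≤ T → 0 ≤ δ t)
    (x : ℕ → E) (hxX : ∀ t, 1 ≤ t → t ≤ T → x t ∈ X)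
    (hiter : ∀ t, τ < t → t ≤ T → ∃ y z : ℕ → E,
      y 0 = x (t - τ) ∧
      (∀ j, 1 ≤ j → j ≤ Jr → ∃ g : E,
        ‖g - gradient (f (t - τ)) (y (j - 1))‖ ≤ δ (t - τ) ∧ y j ∈ X ∧
        ∀ v ∈ X, ‖(y (j - 1) - (1 / α) • g) - y j‖ ≤ ‖(y (j - 1) - (1 / α) • g) - v‖) ∧
      z 0 = y Jr ∧
      (∀ j, 1 ≤ j → j ≤ Jl → ∃ g : E,
        ‖g - gradient (f t) (z (j - 1))‖ ≤ δ t ∧ z j ∈ X ∧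
        ∀ v ∈ X, ‖(z (j - 1) - (1 / α) • g) - z j‖ ≤ ‖(z (j - 1) - (1 / α) • g) - v‖) ∧
      x t = z Jl)
    (hη : 2 * ((α - μ) / (α + μ - γ)) ^ (Jl + Jr) < 1)
    (ξ : ℝ) (hξ : 0 < ξ) :
    ∑ t ∈ Finset.Icc 1 T, (f t (x t) - f t (xstar t))
      ≤ 1 / (2 * ξ) * ∑ t ∈ Finset.Icc 1 T, ‖gradient (f t) (xstar t)‖ ^ 2
        + (L + ξ) / 2 * (τ : ℝ) * R ^ 2
        + (L + ξ) / (2 * (1 - 2 * ((α - μ) / (α + μ - γ)) ^ (Jl + Jr)))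
          * ((τ : ℝ) * R ^ 2
            + 2 * (τ : ℝ) ^ 2 * ∑ t ∈ Finset.Icc 2 T, ‖xstar t - xstar (t - 1)‖ ^ 2
            + 2 * (1 / (γ * (α + μ - γ))) / (1 - (α - μ) / (α + μ - γ))
              * ∑ t ∈ Finset.Icc 1 T, (δ t) ^ 2) :=
  stmt_13_general X hXconv R hR T τ Jr Jl hτT μ L α γ hμL hLα hγ0 hγ f hdiff hsc hsm xstar hxsX
    hxsmin δ x hxX hiter hη ξ hξ
end
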